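/- Let H̃, M, M̃ be Hermitian positive definite n×n matrices. Let X̂ = [X̂₁ X̂₂] simultaneously diagonalize (H̃,M) with eigenvalue blocks Λ̂₁,Λ̂₂, and let X̃ = [X̃₁ X̃₂] simultaneously diagonalize (H̃,M̃) with eigenvalue blocks Λ̃₁,Λ̃₂ (blocks of sizes k and n−k). If gap_comp := min { |λ̂_i − λ̃_j|/λ̃_j : λ̂_i ∈ σ(Λ̂₂), λ̃_j ∈ σ(Λ̃₁) } > 0, then ‖X̂₂* M X̃₁‖_F ≤ ‖M^{-1/2}(M−M̃)M̃^{-1/2}‖_F / gap_comp. -/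

import Mathlib

/-
Computing `X̂₂ᴴ H̃ X̃₁` through either pencil gives the Sylvester equation
`Λ̂₂ W − W Λ̃₁ = −E Λ̃₁` for `W = X̂₂ᴴ M X̃₁` and `E = X̂₂ᴴ (M − M̃) X̃₁`. Entry by entry it reads
`|λ̂ᵢ − λ̃ⱼ| |Wᵢⱼ| = λ̃ⱼ |Eᵢⱼ|`, hence `‖W‖_F ≤ ‖E‖_F / gap`. Finally
`E = (M^{1/2} X̂₂)ᴴ (M^{-1/2} (M − M̃) M̃^{-1/2}) (M̃^{1/2} X̃₁)`, whose outer factors have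
orthonormal columns and so do not increase the Frobenius norm.
-/

open Matrix
open scoped ComplexOrder

noncomputable def specNorm {n : Type*} [Fintype n] [DecidableEq n] (A : Matrix n n ℂ) : ℝ :=
  ‖Matrix.toEuclideanCLM (𝕜 := ℂ) A‖

noncomputable def frobNorm {m k : Type*} [Fintype m] [Fintype k] (A : Matrix m k ℂ) : ℝ :=
  Real.sqrt (∑ i, ∑ j, ‖A i j‖ ^ 2)

noncomputable def psqrt {n : Type*} [Fintype n] [DecidableEq n] {A : Matrix n n ℂ}
    (hA : A.PosDef) : Matrix n n ℂ :=
  (hA.1.eigenvectorUnitary : Matrix n n ℂ) * diagonal ((↑) ∘ (√·) ∘ hA.1.eigenvalues) *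
    (star hA.1.eigenvectorUnitary : Matrix n n ℂ)

section Frobenius

variable {m n p q : Type*} [Fintype m] [Fintype n] [Fintype p] [Fintype q]

lemma frobNorm_eq_sqrt_re_trace (A : Matrix m n ℂ) : frobNorm A = √(Aᴴ * A).trace.re := by
  rw [frobNorm, trace, Finset.sum_comm, Complex.re_sum]
  congr 2 with j
  simp only [diag_apply, mul_apply, conjTranspose_apply, Complex.re_sum, Complex.star_def,
    ← Complex.normSq_eq_conj_mul_self, Complex.ofReal_re, Complex.normSq_eq_norm_sq]

lemma frobNorm_conjTranspose (A : Matrix m n ℂ) : frobNorm Aᴴ = frobNorm A := by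
  rw [frobNorm, frobNorm, Finset.sum_comm]
  simp only [conjTranspose_apply, norm_star]

lemma frobNorm_le_div_of_mul_norm_le {A B : Matrix m n ℂ} {c : ℝ} (hc : 0 < c)
    (h : ∀ i j, c * ‖A i j‖ ≤ ‖B i j‖) : frobNorm A ≤ frobNorm B / c := by
  rw [le_div_iff₀ hc, frobNorm, frobNorm, ← Real.sqrt_sq hc.le, ← Real.sqrt_mul (by positivity)]
  refine Real.sqrt_le_sqrt ?_
  simp only [Finset.sum_mul]
  gcongr with i _ j _
  rw [← mul_pow, mul_comm]
  exact pow_le_pow_left₀ (by positivity) (h i j) 2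

variable [DecidableEq n] [DecidableEq q]

lemma frobNorm_conjTranspose_mul_le {U : Matrix m n ℂ} (hU : Uᴴ * U = 1) (B : Matrix m p ℂ) :
    frobNorm (Uᴴ * B) ≤ frobNorm B := by
  set R := B - U * (Uᴴ * B)
  have hUU (X : Matrix n p ℂ) : Uᴴ * (U * X) = X := by rw [← Matrix.mul_assoc, hU, Matrix.one_mul]
  have hpyth : Bᴴ * B = (Uᴴ * B)ᴴ * (Uᴴ * B) + Rᴴ * R := by
    simp only [R, conjTranspose_mul, conjTranspose_sub, conjTranspose_conjTranspose,
      Matrix.mul_sub, Matrix.sub_mul, Matrix.mul_assoc, hUU]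
    abel
  rw [frobNorm_eq_sqrt_re_trace, frobNorm_eq_sqrt_re_trace, hpyth, trace_add, Complex.add_re]
  gcongr
  exact le_add_of_nonneg_right
    (Complex.nonneg_iff.mp (posSemidef_conjTranspose_mul_self R).trace_nonneg).1

lemma frobNorm_conjTranspose_mul_mul_le {U : Matrix m n ℂ} {V : Matrix p q ℂ}
    (hU : Uᴴ * U = 1) (hV : Vᴴ * V = 1) (A : Matrix m p ℂ) :
    frobNorm (Uᴴ * A * V) ≤ frobNorm A :=
  calc frobNorm (Uᴴ * A * V) ≤ frobNorm (A * V) := by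
        rw [Matrix.mul_assoc]; exact frobNorm_conjTranspose_mul_le hU _
    _ = frobNorm (Vᴴ * Aᴴ) := by rw [← frobNorm_conjTranspose, conjTranspose_mul]
    _ ≤ frobNorm A := (frobNorm_conjTranspose_mul_le hV _).trans_eq (frobNorm_conjTranspose A)

end Frobenius

lemma frobNorm_le_div_of_sylvester {m n : Type*} [Fintype m] [Fintype n] [DecidableEq m]
    [DecidableEq n] {a : m → ℝ} {b : n → ℝ} {W E : Matrix m n ℂ} {g : ℝ}
    (hW : diagonal (fun i => (a i : ℂ)) * W - W * diagonal (fun j => (b j : ℂ)) =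
      -(E * diagonal (fun j => (b j : ℂ))))
    (hg : 0 < g) (hgap : ∀ i j, g ≤ |a i - b j| / b j) :
    frobNorm W ≤ frobNorm E / g := by
  refine frobNorm_le_div_of_mul_norm_le hg fun i j => ?_
  have hij : ((a i - b j : ℝ) : ℂ) * W i j = -(E i j * b j) := by
    have := congrFun (congrFun hW i) j
    simp only [Matrix.sub_apply, Matrix.neg_apply, diagonal_mul, mul_diagonal] at this
    push_cast
    linear_combination this
  have hnorm : |a i - b j| * ‖W i j‖ = ‖E i j‖ * |b j| := by
    simpa only [norm_mul, norm_neg, Complex.norm_real, Real.norm_eq_abs] using congrArg norm hij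
  have hb : 0 < b j := by
    have := hg.trans_le (hgap i j)
    exact lt_of_not_ge fun h => this.not_ge (div_nonpos_of_nonneg_of_nonpos (abs_nonneg _) h)
  calc g * ‖W i j‖ ≤ |a i - b j| / b j * ‖W i j‖ := by gcongr; exact hgap i j
    _ = ‖E i j‖ := by rw [div_mul_eq_mul_div, hnorm, abs_of_pos hb, mul_div_cancel_right₀ _ hb.ne']

section Pencil

variable {R n : Type*} [CommRing R] [Star R] [Fintype n] [DecidableEq n]

lemma conjTranspose_mul_eq_diagonal_mul {H M X : Matrix n n R} {d : n → R}
    (hH : Xᴴ * H * X = diagonal d) (hM : Xᴴ * M * X = 1) : Xᴴ * H = diagonal d * (Xᴴ * M) := by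
  have hinv : X * (Xᴴ * M) = 1 := mul_eq_one_comm.mp hM
  rw [← hH, Matrix.mul_assoc _ X, hinv, Matrix.mul_one]

lemma mul_eq_mul_mul_diagonal {H M X : Matrix n n R} {d : n → R}
    (hH : Xᴴ * H * X = diagonal d) (hM : Xᴴ * M * X = 1) : H * X = M * X * diagonal d := by
  have hinv : M * X * Xᴴ = 1 := mul_eq_one_comm.mp (by rwa [Matrix.mul_assoc] at hM)
  rw [← hH, ← Matrix.mul_assoc, ← Matrix.mul_assoc, hinv, Matrix.one_mul]

lemma sylvester_of_simultaneous_diag {H M M' X X' : Matrix n n R} {d d' : n → R}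
    (hH : Xᴴ * H * X = diagonal d) (hM : Xᴴ * M * X = 1)
    (hH' : X'ᴴ * H * X' = diagonal d') (hM' : X'ᴴ * M' * X' = 1) :
    diagonal d * (Xᴴ * M * X') - Xᴴ * M * X' * diagonal d' =
      -(Xᴴ * (M - M') * X' * diagonal d') := by
  have hleft : diagonal d * (Xᴴ * M * X') = Xᴴ * M' * X' * diagonal d' := by
    rw [← Matrix.mul_assoc, ← conjTranspose_mul_eq_diagonal_mul hH hM, Matrix.mul_assoc,
      mul_eq_mul_mul_diagonal hH' hM', ← Matrix.mul_assoc, ← Matrix.mul_assoc]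
  rw [hleft, Matrix.mul_sub, Matrix.sub_mul, Matrix.sub_mul]
  abel

end Pencil

lemma conjTranspose_fromCols_mul_mul_fromCols {N a b c d α : Type*} [Fintype N] [Semiring α]
    [Star α] (Y₁ : Matrix N a α) (Y₂ : Matrix N b α) (Z₁ : Matrix N c α) (Z₂ : Matrix N d α)
    (A : Matrix N N α) :
    (fromCols Y₁ Y₂)ᴴ * A * fromCols Z₁ Z₂ =
      fromBlocks (Y₁ᴴ * A * Z₁) (Y₁ᴴ * A * Z₂) (Y₂ᴴ * A * Z₁) (Y₂ᴴ * A * Z₂) := by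
  rw [conjTranspose_fromCols_eq_fromRows_conjTranspose, fromRows_mul, fromRows_mul_fromCols]

section Sqrt

variable {n p q : Type*} [Fintype n] [DecidableEq n] {A : Matrix n n ℂ}

lemma psqrt_eq_cfc (hA : A.PosDef) : psqrt hA = cfc Real.sqrt A := by
  rw [hA.1.cfc_eq, IsHermitian.cfc, Unitary.conjStarAlgAut_apply]
  rfl

lemma psqrt_mul_self (hA : A.PosDef) : psqrt hA * psqrt hA = A := by
  rw [psqrt_eq_cfc, ← cfc_mul ..]
  conv_rhs => rw [← cfc_id' ℝ A hA.1]
  refine cfc_congr (a := A) fun x hx => Real.mul_self_sqrt ?_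
  obtain ⟨i, rfl⟩ := hA.1.spectrum_real_eq_range_eigenvalues ▸ hx
  exact (hA.eigenvalues_pos i).le

lemma isHermitian_psqrt (hA : A.PosDef) : (psqrt hA).IsHermitian := by
  rw [psqrt_eq_cfc]
  exact cfc_predicate _ _

lemma isUnit_det_psqrt (hA : A.PosDef) : IsUnit (psqrt hA).det :=
  (isUnit_iff_isUnit_det _).mp <|
    isUnit_of_mul_isUnit_left ((psqrt_mul_self hA).symm ▸ hA.isUnit)

lemma conjTranspose_psqrt_mul_mul_psqrt_mul (hA : A.PosDef) (X : Matrix n p ℂ) :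
    (psqrt hA * X)ᴴ * (psqrt hA * X) = Xᴴ * A * X := by
  rw [conjTranspose_mul, (isHermitian_psqrt hA).eq, Matrix.mul_assoc,
    ← Matrix.mul_assoc (psqrt hA), psqrt_mul_self, Matrix.mul_assoc]

lemma frobNorm_conjTranspose_mul_mul_le_psqrt [Fintype p] [Fintype q] [DecidableEq p]
    [DecidableEq q] {B : Matrix n n ℂ} (hA : A.PosDef) (hB : B.PosDef)
    {X : Matrix n p ℂ} {Y : Matrix n q ℂ} (hX : Xᴴ * A * X = 1) (hY : Yᴴ * B * Y = 1)
    (D : Matrix n n ℂ) :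
    frobNorm (Xᴴ * D * Y) ≤ frobNorm ((psqrt hA)⁻¹ * D * (psqrt hB)⁻¹) := by
  have hfactor : Xᴴ * D * Y =
      (psqrt hA * X)ᴴ * ((psqrt hA)⁻¹ * D * (psqrt hB)⁻¹) * (psqrt hB * Y) := by
    simp only [conjTranspose_mul, (isHermitian_psqrt hA).eq, Matrix.mul_assoc]
    rw [nonsing_inv_mul_cancel_left _ _ (isUnit_det_psqrt hB),
      mul_nonsing_inv_cancel_left _ _ (isUnit_det_psqrt hA)]
  rw [hfactor]
  exact frobNorm_conjTranspose_mul_mul_le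
    ((conjTranspose_psqrt_mul_mul_psqrt_mul hA X).trans hX)
    ((conjTranspose_psqrt_mul_mul_psqrt_mul hB Y).trans hY) _

end Sqrt

theorem stmt_9_general {k m : ℕ}
    (Ht M Mt : Matrix (Fin k ⊕ Fin m) (Fin k ⊕ Fin m) ℂ)
    (hM : M.PosDef) (hMt : Mt.PosDef)
    (Xh₁ Xt₁ : Matrix (Fin k ⊕ Fin m) (Fin k) ℂ)
    (Xh₂ Xt₂ : Matrix (Fin k ⊕ Fin m) (Fin m) ℂ)
    (hat1 til1 : Fin k → ℝ) (hat2 til2 : Fin m → ℝ)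
    (hdiagHt : (Matrix.fromCols Xh₁ Xh₂)ᴴ * Ht * Matrix.fromCols Xh₁ Xh₂ =
      Matrix.diagonal (Sum.elim (fun j => (hat1 j : ℂ)) (fun i => (hat2 i : ℂ))))
    (hdiagM : (Matrix.fromCols Xh₁ Xh₂)ᴴ * M * Matrix.fromCols Xh₁ Xh₂ = 1)
    (hdiagHt' : (Matrix.fromCols Xt₁ Xt₂)ᴴ * Ht * Matrix.fromCols Xt₁ Xt₂ =
      Matrix.diagonal (Sum.elim (fun j => (til1 j : ℂ)) (fun i => (til2 i : ℂ))))
    (hdiagMt : (Matrix.fromCols Xt₁ Xt₂)ᴴ * Mt * Matrix.fromCols Xt₁ Xt₂ = 1)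
    (gapc : ℝ)
    (hg : gapc = ⨅ (i : Fin m), ⨅ (j : Fin k), |hat2 i - til1 j| / til1 j)
    (hpos : 0 < gapc) :
    frobNorm (Xh₂ᴴ * M * Xt₁) ≤
      frobNorm ((psqrt hM)⁻¹ * (M - Mt) * (psqrt hMt)⁻¹) / gapc := by
  have hsylv := sylvester_of_simultaneous_diag hdiagHt hdiagM hdiagHt' hdiagMt
  rw [conjTranspose_fromCols_mul_mul_fromCols, conjTranspose_fromCols_mul_mul_fromCols,
    ← fromBlocks_diagonal, ← fromBlocks_diagonal] at hsylv
  have hsylv₂₁ : diagonal (fun i => (hat2 i : ℂ)) * (Xh₂ᴴ * M * Xt₁) -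
      Xh₂ᴴ * M * Xt₁ * diagonal (fun j => (til1 j : ℂ)) =
      -(Xh₂ᴴ * (M - Mt) * Xt₁ * diagonal (fun j => (til1 j : ℂ))) := by
    simpa only [fromBlocks_multiply, sub_eq_add_neg, fromBlocks_neg, fromBlocks_add,
      toBlocks_fromBlocks₂₁, Matrix.zero_mul, Matrix.mul_zero, add_zero, zero_add]
      using congrArg toBlocks₂₁ hsylv
  have hgap (i : Fin m) (j : Fin k) : gapc ≤ |hat2 i - til1 j| / til1 j :=
    hg ▸ (ciInf_le (Set.finite_range _).bddBelow i).trans (ciInf_le (Set.finite_range _).bddBelow j)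
  rw [conjTranspose_fromCols_mul_mul_fromCols, ← fromBlocks_one] at hdiagM hdiagMt
  calc frobNorm (Xh₂ᴴ * M * Xt₁) ≤ frobNorm (Xh₂ᴴ * (M - Mt) * Xt₁) / gapc :=
        frobNorm_le_div_of_sylvester hsylv₂₁ hpos hgap
    _ ≤ frobNorm ((psqrt hM)⁻¹ * (M - Mt) * (psqrt hMt)⁻¹) / gapc := by
        gcongr
        exact frobNorm_conjTranspose_mul_mul_le_psqrt hM hMt
          (fromBlocks_inj.mp hdiagM).2.2.2 (fromBlocks_inj.mp hdiagMt).1 _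

theorem stmt_9 {k m : ℕ}
    (Ht M Mt : Matrix (Fin k ⊕ Fin m) (Fin k ⊕ Fin m) ℂ)
    (hHt : Ht.PosDef) (hM : M.PosDef) (hMt : Mt.PosDef)
    (Xh₁ Xt₁ : Matrix (Fin k ⊕ Fin m) (Fin k) ℂ)
    (Xh₂ Xt₂ : Matrix (Fin k ⊕ Fin m) (Fin m) ℂ)
    (hat1 til1 : Fin k → ℝ) (hat2 til2 : Fin m → ℝ)
    (hdiagHt : (Matrix.fromCols Xh₁ Xh₂)ᴴ * Ht * Matrix.fromCols Xh₁ Xh₂ =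
      Matrix.diagonal (Sum.elim (fun j => (hat1 j : ℂ)) (fun i => (hat2 i : ℂ))))
    (hdiagM : (Matrix.fromCols Xh₁ Xh₂)ᴴ * M * Matrix.fromCols Xh₁ Xh₂ = 1)
    (hdiagHt' : (Matrix.fromCols Xt₁ Xt₂)ᴴ * Ht * Matrix.fromCols Xt₁ Xt₂ =
      Matrix.diagonal (Sum.elim (fun j => (til1 j : ℂ)) (fun i => (til2 i : ℂ))))
    (hdiagMt : (Matrix.fromCols Xt₁ Xt₂)ᴴ * Mt * Matrix.fromCols Xt₁ Xt₂ = 1)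
    (gapc : ℝ)
    (hg : gapc = ⨅ (i : Fin m), ⨅ (j : Fin k), |hat2 i - til1 j| / til1 j)
    (hpos : 0 < gapc) :
    frobNorm (Xh₂ᴴ * M * Xt₁) ≤
      frobNorm ((psqrt hM)⁻¹ * (M - Mt) * (psqrt hMt)⁻¹) / gapc :=
  stmt_9_general Ht M Mt hM hMt Xh₁ Xt₁ Xh₂ Xt₂ hat1 til1 hat2 til2 hdiagHt hdiagM hdiagHt' hdiagMt
    gapc hg hpos
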